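/- arXiv:2209.06425 — 4 statements merged into one kernel-verified Lean document; each statement's English description precedes it below -/
import Mathlib

section
/- For any square matrices F₁, F₂, H₁, H₂, W of compatible dimensions and any complex number z with z not an eigenvalue of F₁ and z⁻¹ not an eigenvalue of F₂*, the identity [H₁(zI−F₁)⁻¹, I] · Ω(W) · [(z⁻¹I−F₂*)⁻¹H₂*; I] = 0 holds, where Ω(W) is the block matrix [[−W + F₁WF₂*, F₁WH₂*], [H₁WF₂*, H₁WH₂*]]. -/
/-!
Write `A = z - F₁` and `B = z⁻¹ - F₂ᴴ`. Expanding the block product gives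
`H₁ (A⁻¹ (-W + F₁ W F₂ᴴ) B⁻¹ + A⁻¹ F₁ W + W F₂ᴴ B⁻¹ + W) H₂ᴴ`, and the middle factor equals
`A⁻¹ ((F₁ + A) W (F₂ᴴ + B) - W) B⁻¹ = A⁻¹ (z z⁻¹ W - W) B⁻¹ = 0`.
-/

open Matrix

namespace Matrix

variable {R : Type*} {m n₁ n₂ o : Type*}

lemma fromCols_mul_fromBlocks_mul_fromRows_one [Semiring R] [Fintype n₁] [Fintype n₂]
    [Fintype m] [Fintype o] [DecidableEq m] [DecidableEq o]
    (X : Matrix m n₁ R) (Y : Matrix n₂ o R) (P : Matrix n₁ n₂ R) (Q : Matrix n₁ o R)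
    (S : Matrix m n₂ R) (T : Matrix m o R) :
    fromCols X (1 : Matrix m m R) * fromBlocks P Q S T * fromRows Y (1 : Matrix o o R) =
      X * P * Y + X * Q + S * Y + T := by
  rw [fromCols_mul_fromBlocks, fromCols_mul_fromRows]
  simp only [Matrix.one_mul, Matrix.mul_one, Matrix.add_mul]
  abel

variable [CommRing R] {n : Type*} [Fintype n] [DecidableEq n]

lemma nonsing_inv_mul_add_eq_nonsing_inv_mul_mul_nonsing_inv (F G W A B : Matrix n n R)
    (hA : IsUnit A) (hB : IsUnit B) :
    A⁻¹ * (-W + F * W * G) * B⁻¹ + A⁻¹ * (F * W) + W * G * B⁻¹ + W =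
      A⁻¹ * ((F + A) * W * (G + B) - W) * B⁻¹ := by
  have hA' := (isUnit_iff_isUnit_det A).mp hA
  have hB' := (isUnit_iff_isUnit_det B).mp hB
  simp only [Matrix.add_mul, Matrix.mul_add, Matrix.mul_sub, Matrix.sub_mul, Matrix.mul_neg,
    Matrix.neg_mul, Matrix.mul_assoc, nonsing_inv_mul_cancel_left A _ hA',
    mul_nonsing_inv B hB', Matrix.mul_one]
  abel

lemma resolvent_sandwich_eq_zero (F G W : Matrix n n R) {z w : R} (hwz : w * z = 1)
    (hF : IsUnit (z • 1 - F)) (hG : IsUnit (w • 1 - G)) :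
    (z • 1 - F)⁻¹ * (-W + F * W * G) * (w • 1 - G)⁻¹ + (z • 1 - F)⁻¹ * (F * W) +
      W * G * (w • 1 - G)⁻¹ + W = 0 := by
  rw [nonsing_inv_mul_add_eq_nonsing_inv_mul_mul_nonsing_inv F G W _ _ hF hG,
    add_sub_cancel, add_sub_cancel]
  simp only [Matrix.smul_mul, Matrix.mul_smul, Matrix.one_mul, Matrix.mul_one, smul_smul, hwz,
    one_smul, sub_self, Matrix.mul_zero, Matrix.zero_mul]

end Matrix

theorem stmt_4 {n m r : ℕ} (F₁ F₂ W : Matrix (Fin n) (Fin n) ℂ)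
    (H₁ : Matrix (Fin m) (Fin n) ℂ) (H₂ : Matrix (Fin r) (Fin n) ℂ)
    (z : ℂ) (hz : z ≠ 0)
    (h1 : IsUnit (z • (1 : Matrix (Fin n) (Fin n) ℂ) - F₁))
    (h2 : IsUnit (z⁻¹ • (1 : Matrix (Fin n) (Fin n) ℂ) - F₂ᴴ)) :
    fromCols (H₁ * (z • (1 : Matrix (Fin n) (Fin n) ℂ) - F₁)⁻¹) (1 : Matrix (Fin m) (Fin m) ℂ) *
        fromBlocks (-W + F₁ * W * F₂ᴴ) (F₁ * W * H₂ᴴ) (H₁ * W * F₂ᴴ) (H₁ * W * H₂ᴴ) *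
        fromRows ((z⁻¹ • (1 : Matrix (Fin n) (Fin n) ℂ) - F₂ᴴ)⁻¹ * H₂ᴴ) (1 : Matrix (Fin r) (Fin r) ℂ) = (0 : Matrix (Fin m) (Fin r) ℂ) := by
  set A := z • (1 : Matrix (Fin n) (Fin n) ℂ) - F₁
  set B := z⁻¹ • (1 : Matrix (Fin n) (Fin n) ℂ) - F₂ᴴ
  have factor_H : H₁ * A⁻¹ * (-W + F₁ * W * F₂ᴴ) * (B⁻¹ * H₂ᴴ) + H₁ * A⁻¹ * (F₁ * W * H₂ᴴ) +
        H₁ * W * F₂ᴴ * (B⁻¹ * H₂ᴴ) + H₁ * W * H₂ᴴ =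
      H₁ * (A⁻¹ * (-W + F₁ * W * F₂ᴴ) * B⁻¹ + A⁻¹ * (F₁ * W) + W * F₂ᴴ * B⁻¹ + W) * H₂ᴴ := by
    simp only [Matrix.mul_add, Matrix.add_mul, Matrix.mul_assoc]
  rw [fromCols_mul_fromBlocks_mul_fromRows_one, factor_H,
    resolvent_sandwich_eq_zero F₁ F₂ᴴ W (inv_mul_cancel₀ hz) h1 h2, Matrix.mul_zero,
    Matrix.zero_mul]
end

section
/- For a square matrix F, a matrix H, and a Hermitian matrix P, and any nonzero z ∈ ℂ with zI − F and z⁻¹I − F* invertible, [H(zI−F)⁻¹, I] · [[−P + FPF*, FPH*], [HPF*, HPH*]] · [(z⁻¹I−F*)⁻¹H*; I] = 0. -/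
/-!
Write `A = zI - F` and `B = z⁻¹I - F*`. Since `F + A = zI` and `F* + B = z⁻¹I`, we have
`(F + A) P (F* + B) = P`, i.e. `FPF* - P = -(FPB + APF* + APB)`. Multiplying out the block product gives
`H (A⁻¹ (FPF* - P) B⁻¹ + A⁻¹FP + PF*B⁻¹ + P) H*`, and substituting the previous identity makes the bracket
vanish.
-/

open Matrix

theorem resolvent_identity_of_add_mul_add_eq {R : Type*} [Ring R] {a a' b b' f g p : R}
    (ha : a' * a = 1) (hb : b * b' = 1) (h : (f + a) * p * (g + b) = p) :
    a' * (-p + f * p * g) * b' + a' * f * p + p * g * b' + p = 0 := by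
  have hp : -p + f * p * g = -(f * p * b + a * p * g + a * p * b) := by
    rw [eq_neg_iff_add_eq_zero, ← sub_eq_zero.mpr h]; noncomm_ring
  rw [hp]
  calc a' * -(f * p * b + a * p * g + a * p * b) * b' + a' * f * p + p * g * b' + p
      = -(a' * f * p * (b * b') + (a' * a) * p * g * b' + (a' * a) * p * (b * b'))
          + a' * f * p + p * g * b' + p := by noncomm_ring
    _ = 0 := by rw [ha, hb]; noncomm_ring

theorem stmt_5_general {n m : ℕ} (F : Matrix (Fin n) (Fin n) ℂ)
    (H : Matrix (Fin m) (Fin n) ℂ) (P : Matrix (Fin n) (Fin n) ℂ)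
    (z : ℂ) (hz : z ≠ 0)
    (h1 : IsUnit (z • (1 : Matrix (Fin n) (Fin n) ℂ) - F))
    (h2 : IsUnit (z⁻¹ • (1 : Matrix (Fin n) (Fin n) ℂ) - Fᴴ)) :
    Matrix.fromCols (H * (z • (1 : Matrix (Fin n) (Fin n) ℂ) - F)⁻¹) (1 : Matrix (Fin m) (Fin m) ℂ) *
        fromBlocks (-P + F * P * Fᴴ) (F * P * Hᴴ) (H * P * Fᴴ) (H * P * Hᴴ) *
        fromRows ((z⁻¹ • (1 : Matrix (Fin n) (Fin n) ℂ) - Fᴴ)⁻¹ * Hᴴ) (1 : Matrix (Fin m) (Fin m) ℂ) = (0 : Matrix (Fin m) (Fin m) ℂ) := by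
  set A := z • (1 : Matrix (Fin n) (Fin n) ℂ) - F
  set B := z⁻¹ • (1 : Matrix (Fin n) (Fin n) ℂ) - Fᴴ
  have hA : A⁻¹ * A = 1 := nonsing_inv_mul A ((isUnit_iff_isUnit_det A).mp h1)
  have hB : B * B⁻¹ = 1 := mul_nonsing_inv B ((isUnit_iff_isUnit_det B).mp h2)
  have hsum : (F + A) * P * (Fᴴ + B) = P := by
    simp [A, B, smul_smul, hz]
  rw [fromCols_mul_fromBlocks, fromCols_mul_fromRows]
  calc _ = H * (A⁻¹ * (-P + F * P * Fᴴ) * B⁻¹ + A⁻¹ * F * P + P * Fᴴ * B⁻¹ + P) * Hᴴ := by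
        simp only [Matrix.add_mul, Matrix.mul_add, Matrix.one_mul, Matrix.mul_one, Matrix.mul_assoc]
        abel
    _ = 0 := by
        rw [resolvent_identity_of_add_mul_add_eq hA hB hsum, Matrix.mul_zero, Matrix.zero_mul]

theorem stmt_5 {n m : ℕ} (F : Matrix (Fin n) (Fin n) ℂ)
    (H : Matrix (Fin m) (Fin n) ℂ) (P : Matrix (Fin n) (Fin n) ℂ) (hP : Pᴴ = P)
    (z : ℂ) (hz : z ≠ 0)
    (h1 : IsUnit (z • (1 : Matrix (Fin n) (Fin n) ℂ) - F))
    (h2 : IsUnit (z⁻¹ • (1 : Matrix (Fin n) (Fin n) ℂ) - Fᴴ)) :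
    Matrix.fromCols (H * (z • (1 : Matrix (Fin n) (Fin n) ℂ) - F)⁻¹) (1 : Matrix (Fin m) (Fin m) ℂ) *
        fromBlocks (-P + F * P * Fᴴ) (F * P * Hᴴ) (H * P * Fᴴ) (H * P * Hᴴ) *
        fromRows ((z⁻¹ • (1 : Matrix (Fin n) (Fin n) ℂ) - Fᴴ)⁻¹ * Hᴴ) (1 : Matrix (Fin m) (Fin m) ℂ) = (0 : Matrix (Fin m) (Fin m) ℂ) :=
  stmt_5_general F H P z hz h1 h2
end

section
/- For a square matrix F, a matrix H, and a Hermitian matrix P, and any nonzero z ∈ ℂ with z⁻¹I − F* and zI − F invertible, [H*(z⁻¹I−F*)⁻¹, I] · [[−P + F*PF, F*PH], [H*PF, H*PH]] · [(zI−F)⁻¹H; I] = 0. -/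
/-!
Write `S = z⁻¹ • 1 - G` and `T = z • 1 - F` (with `G = Fᴴ`, `K = Hᴴ`). Expanding, the product equals
`K (S⁻¹ G + 1) P (F T⁻¹ + 1) H - K S⁻¹ P T⁻¹ H`. Since `G + S = z⁻¹ • 1` and `F + T = z • 1`,
the first factor pair collapses to `(z⁻¹ z) K S⁻¹ P T⁻¹ H`, which cancels the second term.
-/

open Matrix

namespace Matrix

variable {R : Type*} {l n : Type*} [Fintype n] [Fintype l]

theorem fromCols_one_mul_fromBlocks_mul_fromRows_one [Ring R] [DecidableEq l]
    (A : Matrix l n R) (B : Matrix n l R) (G F P : Matrix n n R) (K : Matrix l n R)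
    (H : Matrix n l R) :
    fromCols A (1 : Matrix l l R) * fromBlocks (-P + G * P * F) (G * P * H) (K * P * F) (K * P * H) *
        fromRows B (1 : Matrix l l R) = (A * G + K) * P * (F * B + H) - A * P * B := by
  rw [fromCols_mul_fromBlocks, fromCols_mul_fromRows]
  simp only [Matrix.one_mul, Matrix.mul_one, Matrix.add_mul, Matrix.mul_add, Matrix.mul_neg,
    Matrix.neg_mul, Matrix.mul_assoc]
  abel

variable [DecidableEq n]

theorem inv_mul_add_one_of_add_eq_smul [CommRing R] {S G : Matrix n n R} {c : R} (hS : IsUnit S)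
    (h : G + S = c • 1) : S⁻¹ * G + 1 = c • S⁻¹ := by
  rw [← nonsing_inv_mul S ((isUnit_iff_isUnit_det S).mp hS), ← Matrix.mul_add, h,
    Matrix.mul_smul, Matrix.mul_one]

theorem mul_inv_add_one_of_add_eq_smul [CommRing R] {T F : Matrix n n R} {c : R} (hT : IsUnit T)
    (h : F + T = c • 1) : F * T⁻¹ + 1 = c • T⁻¹ := by
  rw [← mul_nonsing_inv T ((isUnit_iff_isUnit_det T).mp hT), ← Matrix.add_mul, h,
    Matrix.smul_mul, Matrix.one_mul]

theorem fromCols_mul_fromBlocks_mul_fromRows_resolvent_eq_zero [Field R] [DecidableEq l]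
    (F G P : Matrix n n R) (K : Matrix l n R) (H : Matrix n l R) {z : R} (hz : z ≠ 0)
    (hT : IsUnit (z • (1 : Matrix n n R) - F)) (hS : IsUnit (z⁻¹ • (1 : Matrix n n R) - G)) :
    fromCols (K * (z⁻¹ • (1 : Matrix n n R) - G)⁻¹) (1 : Matrix l l R) *
        fromBlocks (-P + G * P * F) (G * P * H) (K * P * F) (K * P * H) *
        fromRows ((z • (1 : Matrix n n R) - F)⁻¹ * H) (1 : Matrix l l R) = 0 := by
  set S := z⁻¹ • (1 : Matrix n n R) - G
  set T := z • (1 : Matrix n n R) - F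
  have hGS : S⁻¹ * G + 1 = z⁻¹ • S⁻¹ :=
    inv_mul_add_one_of_add_eq_smul hS (add_sub_cancel G _)
  have hFT : F * T⁻¹ + 1 = z • T⁻¹ :=
    mul_inv_add_one_of_add_eq_smul hT (add_sub_cancel F _)
  rw [fromCols_one_mul_fromBlocks_mul_fromRows_one, sub_eq_zero]
  calc (K * S⁻¹ * G + K) * P * (F * (T⁻¹ * H) + H)
      = K * (S⁻¹ * G + 1) * P * ((F * T⁻¹ + 1) * H) := by
        simp only [Matrix.mul_add, Matrix.add_mul, Matrix.mul_one, Matrix.one_mul,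
          Matrix.mul_assoc]
    _ = (z * z⁻¹) • (K * S⁻¹ * P * (T⁻¹ * H)) := by
        rw [hGS, hFT]
        simp only [Matrix.mul_smul, Matrix.smul_mul, smul_smul, Matrix.mul_assoc]
    _ = K * S⁻¹ * P * (T⁻¹ * H) := by rw [mul_inv_cancel₀ hz, one_smul]

end Matrix

theorem stmt_6_general {n m : ℕ} (F : Matrix (Fin n) (Fin n) ℂ)
    (H : Matrix (Fin n) (Fin m) ℂ) (P : Matrix (Fin n) (Fin n) ℂ)
    (z : ℂ) (hz : z ≠ 0)
    (h1 : IsUnit (z • (1 : Matrix (Fin n) (Fin n) ℂ) - F))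
    (h2 : IsUnit (z⁻¹ • (1 : Matrix (Fin n) (Fin n) ℂ) - Fᴴ)) :
    Matrix.fromCols (Hᴴ * (z⁻¹ • (1 : Matrix (Fin n) (Fin n) ℂ) - Fᴴ)⁻¹) (1 : Matrix (Fin m) (Fin m) ℂ) *
        fromBlocks (-P + Fᴴ * P * F) (Fᴴ * P * H) (Hᴴ * P * F) (Hᴴ * P * H) *
        fromRows ((z • (1 : Matrix (Fin n) (Fin n) ℂ) - F)⁻¹ * H) (1 : Matrix (Fin m) (Fin m) ℂ) = (0 : Matrix (Fin m) (Fin m) ℂ) :=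
  fromCols_mul_fromBlocks_mul_fromRows_resolvent_eq_zero F Fᴴ P Hᴴ H hz h1 h2

theorem stmt_6 {n m : ℕ} (F : Matrix (Fin n) (Fin n) ℂ)
    (H : Matrix (Fin n) (Fin m) ℂ) (P : Matrix (Fin n) (Fin n) ℂ) (hP : Pᴴ = P)
    (z : ℂ) (hz : z ≠ 0)
    (h1 : IsUnit (z • (1 : Matrix (Fin n) (Fin n) ℂ) - F))
    (h2 : IsUnit (z⁻¹ • (1 : Matrix (Fin n) (Fin n) ℂ) - Fᴴ)) :
    Matrix.fromCols (Hᴴ * (z⁻¹ • (1 : Matrix (Fin n) (Fin n) ℂ) - Fᴴ)⁻¹) (1 : Matrix (Fin m) (Fin m) ℂ) *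
        fromBlocks (-P + Fᴴ * P * F) (Fᴴ * P * H) (Hᴴ * P * F) (Hᴴ * P * H) *
        fromRows ((z • (1 : Matrix (Fin n) (Fin n) ℂ) - F)⁻¹ * H) (1 : Matrix (Fin m) (Fin m) ℂ) = (0 : Matrix (Fin m) (Fin m) ℂ) :=
  stmt_6_general F H P z hz h1 h2
end

section
/- Let F, G be bounded operators on ℓ₂ and let Δ₂ be an invertible operator with Δ₂*Δ₂ = I + F*F. Then sup_{w≠0} [‖Gw‖² − ‖(I+FF*)^{-1/2}Gw‖²] / ‖w‖² = ‖Δ₂^{-*}F*G‖². -/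
open ContinuousLinearMap
open scoped InnerProductSpace

set_option maxHeartbeats 1000000 in
theorem stmt_8 {H : Type*} [NormedAddCommGroup H] [InnerProductSpace ℂ H]
    [CompleteSpace H] [Nontrivial H] (F G Δ₂ : H →L[ℂ] H) (hΔ : IsUnit Δ₂)
    (hfac : adjoint Δ₂ * Δ₂ = 1 + adjoint F * F)
    (h : IsUnit (1 + F * adjoint F)) :
    (⨆ w : {w : H // w ≠ 0},
        (‖G (w : H)‖ ^ 2 -
          (⟪G (w : H), (↑h.unit⁻¹ : H →L[ℂ] H) (G (w : H))⟫_ℂ).re) /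
          ‖(w : H)‖ ^ 2) =
      ‖adjoint (↑hΔ.unit⁻¹ : H →L[ℂ] H) * adjoint F * G‖ ^ 2 := by
  set J : H →L[ℂ] H := (↑h.unit⁻¹ : H →L[ℂ] H) with hJ
  set D : H →L[ℂ] H := (↑hΔ.unit⁻¹ : H →L[ℂ] H) with hD
  set T : H →L[ℂ] H := adjoint D * adjoint F * G with hT
  have hDΔ : D * Δ₂ = 1 := by
    have := hΔ.unit.inv_mul
    rwa [hΔ.unit_spec] at this
  have hΔD : Δ₂ * D = 1 := by
    have := hΔ.unit.mul_inv
    rwa [hΔ.unit_spec] at this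
  have hJ1 : (1 + F * adjoint F) * J = 1 := by
    have := h.unit.mul_inv
    rwa [h.unit_spec] at this
  have hJ2 : J * (1 + F * adjoint F) = 1 := by
    have := h.unit.inv_mul
    rwa [h.unit_spec] at this
  -- key operator identity : 1 - J = (F*D) * adjoint (F*D)
  have hadj_mul : ∀ A B : H →L[ℂ] H, adjoint (A * B) = adjoint B * adjoint A := by
    intro A B; exact adjoint_comp A B
  have hkey : 1 - J = (F * D) * adjoint (F * D) := by
    have hpush : (1 + F * adjoint F) * F = F * (adjoint Δ₂ * Δ₂) := by
      rw [hfac]; noncomm_ring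
    have h1 : (1 + F * adjoint F) * (1 - J) = F * adjoint F := by
      rw [mul_sub, hJ1, mul_one]; noncomm_ring
    have h2 : (1 + F * adjoint F) * ((F * D) * adjoint (F * D)) = F * adjoint F := by
      have hDa : Δ₂ * (D * adjoint D) = adjoint D := by
        rw [← mul_assoc, hΔD, one_mul]
      calc (1 + F * adjoint F) * ((F * D) * adjoint (F * D))
          = ((1 + F * adjoint F) * F) * (D * (adjoint D * adjoint F)) := by
            rw [hadj_mul]; noncomm_ring
        _ = F * (adjoint Δ₂ * (Δ₂ * (D * adjoint D))) * adjoint F := by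
            rw [hpush]; noncomm_ring
        _ = F * (adjoint Δ₂ * adjoint D) * adjoint F := by rw [hDa]
        _ = F * adjoint (D * Δ₂) * adjoint F := by rw [hadj_mul]
        _ = F * adjoint F := by rw [hDΔ, ← star_eq_adjoint, star_one, mul_one]
    have := congrArg (fun X => J * X) (h1.trans h2.symm)
    simpa [← mul_assoc, hJ2, one_mul] using this
  -- pointwise numerator identity
  have hnum : ∀ x : H, ‖G x‖ ^ 2 - (⟪G x, J (G x)⟫_ℂ).re = ‖T x‖ ^ 2 := by
    intro x
    have e1 : ‖G x‖ ^ 2 - (⟪G x, J (G x)⟫_ℂ).re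
        = (⟪G x, ((1 : H →L[ℂ] H) - J) (G x)⟫_ℂ).re := by
      have h0 : ((1 : H →L[ℂ] H) - J) (G x) = G x - J (G x) := by simp
      have hre : (⟪G x, G x⟫_ℂ).re = ‖G x‖ ^ 2 := by
        simpa using inner_self_eq_norm_sq (𝕜 := ℂ) (G x)
      rw [h0, inner_sub_right, Complex.sub_re, hre]
    rw [e1, hkey]
    have e2 : ((F * D) * adjoint (F * D)) (G x) = (F * D) ((adjoint (F * D)) (G x)) := rfl
    rw [e2, ← adjoint_inner_left (F * D)]
    have e3 : (adjoint (F * D)) (G x) = T x := by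
      rw [hadj_mul]; rfl
    rw [e3]
    simpa using inner_self_eq_norm_sq (𝕜 := ℂ) (T x)
  -- now the sup statement
  have hterm : ∀ w : {w : H // w ≠ 0},
      (‖G (w : H)‖ ^ 2 - (⟪G (w : H), J (G (w : H))⟫_ℂ).re) / ‖(w : H)‖ ^ 2
        = ‖T (w : H)‖ ^ 2 / ‖(w : H)‖ ^ 2 := fun w => by rw [hnum]
  calc (⨆ w : {w : H // w ≠ 0},
        (‖G (w : H)‖ ^ 2 - (⟪G (w : H), J (G (w : H))⟫_ℂ).re) / ‖(w : H)‖ ^ 2)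
      = ⨆ w : {w : H // w ≠ 0}, ‖T (w : H)‖ ^ 2 / ‖(w : H)‖ ^ 2 := by
        exact iSup_congr hterm
    _ = ‖T‖ ^ 2 := by
        obtain ⟨x, hx⟩ := exists_ne (0 : H)
        have hne : Nonempty {w : H // w ≠ 0} := ⟨⟨x, hx⟩⟩
        have hub : ∀ w : {w : H // w ≠ 0}, ‖T (w : H)‖ ^ 2 / ‖(w : H)‖ ^ 2 ≤ ‖T‖ ^ 2 := by
          intro w
          have hwpos : (0:ℝ) < ‖(w : H)‖ ^ 2 := pow_pos (norm_pos_iff.mpr w.2) 2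
          rw [div_le_iff₀ hwpos]
          calc ‖T (w : H)‖ ^ 2 ≤ (‖T‖ * ‖(w : H)‖) ^ 2 := by
                have := T.le_opNorm (w : H)
                exact pow_le_pow_left₀ (norm_nonneg _) this 2
            _ = ‖T‖ ^ 2 * ‖(w : H)‖ ^ 2 := by ring
        have hbdd : BddAbove (Set.range fun w : {w : H // w ≠ 0} =>
            ‖T (w : H)‖ ^ 2 / ‖(w : H)‖ ^ 2) := ⟨‖T‖ ^ 2, by rintro _ ⟨w, rfl⟩; exact hub w⟩
        refine le_antisymm (ciSup_le hub) ?_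
        set S : ℝ := ⨆ w : {w : H // w ≠ 0}, ‖T (w : H)‖ ^ 2 / ‖(w : H)‖ ^ 2 with hS
        have hS0 : 0 ≤ S := by
          refine le_trans ?_ (le_ciSup hbdd ⟨x, hx⟩)
          positivity
        have hle : ∀ z : H, ‖T z‖ ≤ Real.sqrt S * ‖z‖ := by
          intro z
          by_cases hz : z = 0
          · simp [hz]
          · have hzpos : (0:ℝ) < ‖z‖ ^ 2 := pow_pos (norm_pos_iff.mpr hz) 2
            have h1 : ‖T z‖ ^ 2 / ‖z‖ ^ 2 ≤ S := le_ciSup hbdd ⟨z, hz⟩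
            have h2 : ‖T z‖ ^ 2 ≤ S * ‖z‖ ^ 2 := by
              rwa [div_le_iff₀ hzpos] at h1
            have h3 : ‖T z‖ ≤ Real.sqrt (S * ‖z‖ ^ 2) := by
              rw [← Real.sqrt_sq (norm_nonneg (T z))]
              exact Real.sqrt_le_sqrt h2
            rwa [Real.sqrt_mul hS0, Real.sqrt_sq (norm_nonneg z)] at h3
        have hTn : ‖T‖ ≤ Real.sqrt S := T.opNorm_le_bound (Real.sqrt_nonneg S) hle
        have : ‖T‖ ^ 2 ≤ S := by
          calc ‖T‖ ^ 2 ≤ Real.sqrt S ^ 2 :=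
                pow_le_pow_left₀ (norm_nonneg T) hTn 2
            _ = S := Real.sq_sqrt hS0
        exact this
end
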